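/- Let f : ℂ → ℂ be an SD map. Then the following are equivalent: (1) f preserves ℝ, i.e., f(x) is real for every real x; (2) the restriction of f to ℝ is continuous; (3) f fixes ℝ pointwise, i.e., f(x) = x for every real x. -/

import Mathlib

/-!
Over a field of characteristic zero an SD map fixes `0` and `1` and commutes with `x ↦ -x`,
`x ↦ x⁻¹` and `x ↦ x²`; evaluating at a few small integers forces `f 2 = 2`, an induction gives
`f n = n`, and writing `q = (u + v) / (u - v)` with `u = num + den`, `v = num - den` gives
`f q = q` for every rational `q`. An SD map `ℝ → ℝ` sends squares to squares, hence positive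
numbers to positive numbers, hence is strictly increasing; fixing `ℚ`, it is the identity.
A map preserving `ℝ` restricts to such a map, and a continuous restriction agrees with the
identity on the dense set `ℚ`.
-/

/-- A function `f : F → F` on a field `F` is an *SD map* if for all `x ≠ y` one has
`f x ≠ f y` and `f ((x+y)/(x-y)) = (f x + f y) / (f x - f y)`. -/
def IsSDMap {F : Type*} [Field F] (f : F → F) : Prop :=
  ∀ ⦃x y : F⦄, x ≠ y →
    f x ≠ f y ∧ f ((x + y) / (x - y)) = (f x + f y) / (f x - f y)

theorem eq_of_add_one_div_sub_one_eq {F : Type*} [Field F] [NeZero (2 : F)] {s t : F}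
    (hs : s ≠ 1) (ht : t ≠ 1) (h : (s + 1) / (s - 1) = (t + 1) / (t - 1)) : s = t := by
  rw [div_eq_div_iff (sub_ne_zero.2 hs) (sub_ne_zero.2 ht)] at h
  exact mul_left_cancel₀ two_ne_zero (by linear_combination -h)

theorem sq_add_one_div_sq_sub_one {F : Type*} [Field F] {x : F} (hx : x ≠ 0) :
    (x ^ 2 + 1) / (x ^ 2 - 1) = (x + x⁻¹) / (x - x⁻¹) := by
  rw [← mul_div_mul_left _ (x - x⁻¹) hx, mul_add, mul_sub, mul_inv_cancel₀ hx, sq]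

namespace IsSDMap

section Field

variable {F : Type*} [Field F] {f : F → F}

theorem injective (hf : IsSDMap f) : Function.Injective f :=
  fun _ _ hxy => by_contra fun hne => (hf hne).1 hxy

variable [NeZero (2 : F)]

theorem map_one (hf : IsSDMap f) : f 1 = 1 := by
  obtain ⟨h10, e1⟩ := hf (one_ne_zero : (1 : F) ≠ 0)
  obtain ⟨h20, e2⟩ := hf (two_ne_zero : (2 : F) ≠ 0)
  have h12 : f 1 - f 2 ≠ 0 :=
    sub_ne_zero.2 (hf.injective.ne fun h => one_ne_zero (by linear_combination -h))
  rw [add_zero, sub_zero, div_self one_ne_zero, eq_div_iff (sub_ne_zero.2 h10)] at e1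
  rw [add_zero, sub_zero, div_self two_ne_zero, eq_div_iff (sub_ne_zero.2 h20)] at e2
  exact mul_right_cancel₀ h12 (by linear_combination e1 - e2)

theorem map_zero (hf : IsSDMap f) : f 0 = 0 := by
  obtain ⟨h10, e1⟩ := hf (one_ne_zero : (1 : F) ≠ 0)
  rw [add_zero, sub_zero, div_self one_ne_zero, eq_div_iff (sub_ne_zero.2 h10), hf.map_one] at e1
  exact mul_left_cancel₀ two_ne_zero (by linear_combination -e1)

-- For `x = y` both sides are `0` by the `/ 0` convention.
theorem map_add_div_sub (hf : IsSDMap f) (x y : F) :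
    f ((x + y) / (x - y)) = (f x + f y) / (f x - f y) := by
  rcases eq_or_ne x y with rfl | hxy
  · simp [hf.map_zero]
  · exact (hf hxy).2

theorem map_neg (hf : IsSDMap f) (x : F) : f (-x) = -f x := by
  have h := hf.map_add_div_sub x (-x)
  rw [add_neg_cancel, zero_div, hf.map_zero, eq_comm, div_eq_zero_iff] at h
  rcases h with h | h
  · linear_combination h
  · have hx : x = 0 := by
      have := hf.injective (sub_eq_zero.1 h)
      exact mul_left_cancel₀ two_ne_zero (by linear_combination this)
    simp [hx, hf.map_zero]

theorem map_inv (hf : IsSDMap f) (x : F) : f x⁻¹ = (f x)⁻¹ := by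
  rcases eq_or_ne x 1 with rfl | hx1
  · simp [hf.map_one]
  have hx1' : x - 1 ≠ 0 := sub_ne_zero.2 hx1
  -- `x` and `x⁻¹` are the images of `u` and `-u` under `t ↦ (t + 1) / (t - 1)`
  obtain ⟨u, hu⟩ : ∃ u, u = (x + 1) / (x - 1) := ⟨_, rfl⟩
  have hu_sub : u - 1 = 2 / (x - 1) := by rw [hu]; field_simp; ring
  have hu_add : u + 1 = 2 * x / (x - 1) := by rw [hu]; field_simp; ring
  have hx : x = (u + 1) / (u - 1) := by
    rw [hu_sub, hu_add, div_div_div_cancel_right₀ hx1', mul_div_cancel_left₀ x two_ne_zero]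
  have hx_inv : x⁻¹ = (u + -1) / (u - -1) := by
    rw [← sub_eq_add_neg, sub_neg_eq_add, hu_sub, hu_add, div_div_div_cancel_right₀ hx1',
      div_mul_cancel_left₀ two_ne_zero]
  rw [hx_inv, hf.map_add_div_sub, hf.map_neg, hf.map_one, hx, hf.map_add_div_sub, hf.map_one,
    inv_div]
  ring

theorem map_sq (hf : IsSDMap f) (x : F) : f (x ^ 2) = f x ^ 2 := by
  rcases eq_or_ne x 0 with rfl | hx0
  · simp [hf.map_zero]
  by_cases hx : x ^ 2 = 1
  · rcases sq_eq_one_iff.1 hx with rfl | rfl <;> simp [hf.map_one, hf.map_neg]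
  have hfx0 : f x ≠ 0 := hf.map_zero ▸ hf.injective.ne hx0
  have hfx2 : f (x ^ 2) ≠ 1 := hf.map_one ▸ hf.injective.ne hx
  have hfx : f x ^ 2 ≠ 1 := by
    obtain ⟨hx1, hxn1⟩ := sq_ne_one_iff.1 hx
    rw [sq_ne_one_iff, ← hf.map_one, ← hf.map_neg]
    exact ⟨hf.injective.ne hx1, hf.injective.ne hxn1⟩
  have h := hf.map_add_div_sub x x⁻¹
  rw [← sq_add_one_div_sq_sub_one hx0, hf.map_inv, ← sq_add_one_div_sq_sub_one hfx0,
    hf.map_add_div_sub, hf.map_one] at h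
  exact eq_of_add_one_div_sub_one_eq hfx2 hfx h

theorem map_add_two (hf : IsSDMap f) {x : F} (hx : x ≠ 0) (h0 : f x = x)
    (h1 : f (x + 1) = x + 1) : f (x + 2) = x + 2 := by
  have hne : f (x + 2) ≠ f x := hf.injective.ne fun h => two_ne_zero' F (by linear_combination h)
  rw [h0] at hne
  have h := hf.map_add_div_sub (x + 2) x
  rw [show (x + 2 + x) / (x + 2 - x) = x + 1 by
      rw [add_sub_cancel_left, eq_comm, eq_div_iff two_ne_zero]; ring,
    h1, h0, eq_div_iff (sub_ne_zero.2 hne)] at h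
  exact mul_left_cancel₀ hx (by linear_combination h)

end Field

section CharZero

variable {F : Type*} [Field F] [CharZero F] {f : F → F}

theorem map_two (hf : IsSDMap f) : f 2 = 2 := by
  have sd {x y z : F} (hxy : x ≠ y) (hz : (x + y) / (x - y) = z) :
      f z * (f x - f y) = f x + f y := by
    rw [← hz, hf.map_add_div_sub, div_mul_cancel₀ _ (sub_ne_zero.2 (hf.injective.ne hxy))]
  have h4 : f 4 = f 2 ^ 2 := by rw [← hf.map_sq]; norm_num
  -- the instances `(2, 1)`, `(3, 2)`, `(5, 3)` express `f 3`, `f 5`, `f 4` through `f 2`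
  have e3 := sd (x := 2) (y := 1) (z := 3) (by norm_num) (by norm_num)
  have e5 := sd (x := 3) (y := 2) (z := 5) (by norm_num) (by norm_num)
  have e4 := sd (x := 5) (y := 3) (z := 4) (by norm_num) (by norm_num)
  rw [hf.map_one] at e3
  rw [h4] at e4
  have key : 2 * f 2 * (f 2 + 1) * (f 2 ^ 2 + 1) * (f 2 - 2) = 0 := by
    linear_combination (f 2 - 1) ^ 2 * (f 3 - f 2) * e4 - (f 2 - 1) ^ 2 * (f 2 ^ 2 - 1) * e5
      - (-(f 2 ^ 2 + 1) * (f 3 * (f 2 - 1) + f 2 + 1)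
        + (f 2 ^ 3 + f 2 ^ 2 + f 2 - 1) * (f 2 - 1)) * e3
  have h20 : f 2 ≠ 0 := hf.map_zero ▸ hf.injective.ne two_ne_zero
  have h2n1 : f 2 + 1 ≠ 0 := by
    rw [← sub_neg_eq_add, sub_ne_zero, ← hf.map_one, ← hf.map_neg]
    exact hf.injective.ne (by norm_num)
  have h4n1 : f 2 ^ 2 + 1 ≠ 0 := by
    rw [← sub_neg_eq_add, sub_ne_zero, ← h4, ← hf.map_one, ← hf.map_neg]
    exact hf.injective.ne (by norm_num)
  simpa [h20, h2n1, h4n1, sub_eq_zero] using key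

theorem map_natCast (hf : IsSDMap f) (n : ℕ) : f n = n := by
  have h (n : ℕ) : f (n + 1) = n + 1 ∧ f (n + 2) = n + 2 := by
    induction n with
    | zero => simpa using ⟨hf.map_one, hf.map_two⟩
    | succ n ih =>
      have ih1 : f (n + 1 + 1) = n + 1 + 1 := by rw [add_assoc, one_add_one_eq_two, ih.2]
      push_cast
      exact ⟨ih1, hf.map_add_two n.cast_add_one_ne_zero ih.1 ih1⟩
  cases n with
  | zero => simpa using hf.map_zero
  | succ n => exact_mod_cast (h n).1

theorem map_intCast (hf : IsSDMap f) (n : ℤ) : f n = n := by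
  obtain ⟨m, rfl | rfl⟩ := n.eq_nat_or_neg <;> simp [hf.map_neg, hf.map_natCast]

theorem map_ratCast (hf : IsSDMap f) (q : ℚ) : f q = q := by
  have hq : (q : F) = ((q.num + q.den : ℤ) + (q.num - q.den : ℤ)) /
      ((q.num + q.den : ℤ) - (q.num - q.den : ℤ)) := by
    push_cast
    rw [Rat.cast_def]
    ring
  rw [hq, hf.map_add_div_sub, hf.map_intCast, hf.map_intCast]

end CharZero

section Real

variable {g : ℝ → ℝ}

theorem pos_of_pos (hg : IsSDMap g) {y : ℝ} (hy : 0 < y) : 0 < g y := by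
  have hsqrt : g √y ≠ 0 := hg.map_zero ▸ hg.injective.ne (Real.sqrt_pos.2 hy).ne'
  rw [← Real.sq_sqrt hy.le, hg.map_sq]
  exact sq_pos_of_ne_zero hsqrt

theorem strictMonoOn_Ici (hg : IsSDMap g) : StrictMonoOn g (Set.Ici 0) := by
  intro b hb a _ hba
  rcases (Set.mem_Ici.1 hb).eq_or_lt with rfl | hb
  · rw [hg.map_zero]
    exact hg.pos_of_pos hba
  have hquot := hg.pos_of_pos (div_pos (by linarith) (sub_pos.2 hba) : 0 < (a + b) / (a - b))
  rw [hg.map_add_div_sub] at hquot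
  have hsum : 0 < g a + g b := add_pos (hg.pos_of_pos (hb.trans hba)) (hg.pos_of_pos hb)
  exact sub_pos.1 ((div_pos_iff_of_pos_left hsum).1 hquot)

theorem strictMono (hg : IsSDMap g) : StrictMono g :=
  strictMono_of_odd_strictMonoOn_nonneg hg.map_neg hg.strictMonoOn_Ici

end Real

end IsSDMap

theorem Real.eq_id_of_isSDMap {g : ℝ → ℝ} (hg : IsSDMap g) : g = id := by
  funext x
  have hmono := hg.strictMono.monotone
  apply le_antisymm
  · exact le_of_forall_lt_rat_imp_le fun q hq => hg.map_ratCast q ▸ hmono hq.le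
  · exact le_of_forall_rat_lt_imp_le fun q hq => hg.map_ratCast q ▸ hmono hq.le

theorem IsSDMap.re_comp_ofReal {f : ℂ → ℂ} (hf : IsSDMap f)
    (hreal : ∀ x : ℝ, ∃ r : ℝ, f x = r) : IsSDMap fun x : ℝ => (f x).re := by
  have hre (x : ℝ) : ((f x).re : ℂ) = f x := by
    obtain ⟨r, hr⟩ := hreal x
    simp [hr]
  intro x y hxy
  obtain ⟨hne, heq⟩ := hf (Complex.ofReal_injective.ne hxy)
  refine ⟨fun h => hne (by rw [← hre x, ← hre y]; exact congrArg _ h), Complex.ofReal_injective ?_⟩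
  rw [hre]
  push_cast [hre]
  exact heq

theorem sd_map_complex_real_tfae (f : ℂ → ℂ) (hf : IsSDMap f) :
    List.TFAE [
      ∀ x : ℝ, ∃ r : ℝ, f (x : ℂ) = (r : ℂ),
      Continuous fun x : ℝ => f (x : ℂ),
      ∀ x : ℝ, f (x : ℂ) = (x : ℂ)] := by
  tfae_have 1 → 3 := fun hreal x => by
    obtain ⟨r, hr⟩ := hreal x
    have hx : (f x).re = x := congrFun (Real.eq_id_of_isSDMap (hf.re_comp_ofReal hreal)) x
    rw [hr, Complex.ofReal_re] at hx
    rw [hr, hx]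
  tfae_have 3 → 1 := fun hid x => ⟨x, hid x⟩
  tfae_have 3 → 2 := fun hid => by
    simpa only [hid] using Complex.continuous_ofReal
  tfae_have 2 → 3 := fun hcont => congrFun <|
    Rat.denseRange_cast.equalizer hcont Complex.continuous_ofReal <|
      funext fun q => by simpa using hf.map_ratCast q
  tfae_finish
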